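/- arXiv:2503.05159 — 2 statements merged into one kernel-verified Lean document; each statement's English description precedes it below -/
import Mathlib

section
/- Let R_X, R_Y, K, K̃ be positive integers. Consider two parameterizations of the functional cluster weighted model: {(π_k, Γ*_k, Σ_{Y,k}, μ_{X,k}, Σ_{X,k}) : k = 1,…,K} and {(π̃_k, Γ̃*_k, Σ̃_{Y,k}, μ̃_{X,k}, Σ̃_{X,k}) : k = 1,…,K̃}, where all π_k, π̃_k > 0 with Σ_k π_k = Σ_k π̃_k = 1, each Γ*_k, Γ̃*_k is a real R_Y × (R_X + 1) matrix, each Σ_{Y,k}, Σ̃_{Y,k} is a symmetric positive definite R_Y × R_Y matrix, each Σ_{X,k}, Σ̃_{X,k} is a symmetric positive definite R_X × R_X matrix, and within each family the pairs (Γ*_k, Σ_{Y,k}) (respectively (Γ̃*_k, Σ̃_{Y,k})) are pairwise distinct. Suppose there exists a set 𝒳 ⊆ ℝ^{R_X} whose complement is Lebesgue-null (so 𝒳 has probability one under any nondegenerate R_X-variate Gaussian distribution) such that for each fixed c_X ∈ 𝒳 the finite mixtures of Gaussian regression densities are identifiable, i.e., whenever Σ_{k=1}^{K} α_k φ(c_Y;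 Γ*_k c*_X, Σ_{Y,k}) = Σ_{k=1}^{K̃} α̃_k φ(c_Y; Γ̃*_k c*_X, Σ̃_{Y,k}) for all c_Y ∈ ℝ^{R_Y}, with all α_k, α̃_k > 0 summing to one, then K = K̃ and the collections {(α_k, Γ*_k c*_X, Σ_{Y,k})} and {(α̃_k, Γ̃*_k c*_X, Σ̃_{Y,k})} agree up to a permutation of indices. If Σ_{k=1}^{K} π_k φ(c_Y; Γ*_k c*_X, Σ_{Y,k}) φ(c_X; μ_{X,k}, Σ_{X,k}) = Σ_{k=1}^{K̃} π̃_k φ(c_Y; Γ̃*_k c*_X, Σ̃_{Y,k}) φ(c_X; μ̃_{X,k}, Σ̃_{X,k}) for all c_X ∈ 𝒳 and all c_Y ∈ ℝ^{R_Y}, then K = K̃ and there is a permutation σ of {1,…,K} such that π_k = π̃_{σ(k)}, Γ*_k = Γ̃*_{σ(k)}, Σ_{Y,k} = Σ̃_{Y,σ(k)}, μ_{X,k} = μ̃_{X,σ(k)}, and Σ_{X,k} = Σ̃_{X,σ(k)} for every k. -/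
open Matrix MeasureTheory

/-- Multivariate Gaussian density
`φ(x; μ, Σ) = (2π)^{-m/2} |Σ|^{-1/2} exp(-(1/2)(x-μ)ᵀ Σ⁻¹ (x-μ))`. -/
noncomputable def gaussDensity {m : ℕ} (x μ : Fin m → ℝ) (S : Matrix (Fin m) (Fin m) ℝ) : ℝ :=
  (2 * Real.pi) ^ (-(m : ℝ) / 2) * S.det ^ (-(1 : ℝ) / 2) *
    Real.exp (-(1 / 2) * ((x - μ) ⬝ᵥ (S⁻¹ *ᵥ (x - μ))))

/-- Augmented covariate vector `c*_X = (W_X c_X, 1)ᵀ ∈ ℝ^{R_X+1}`. -/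
noncomputable def augVec {RX : ℕ} (W : Matrix (Fin RX) (Fin RX) ℝ) (c : Fin RX → ℝ) :
    Fin (RX + 1) → ℝ :=
  Fin.snoc (W *ᵥ c) 1

namespace FunWeightClustAux

lemma gauss_pos {m : ℕ} (x μ : Fin m → ℝ) {S : Matrix (Fin m) (Fin m) ℝ} (hS : S.PosDef) :
    0 < gaussDensity x μ S :=
  mul_pos (mul_pos (Real.rpow_pos_of_pos (by positivity) _)
    (Real.rpow_pos_of_pos hS.det_pos _)) (Real.exp_pos _)

lemma gauss_cont {m : ℕ} (μ : Fin m → ℝ) (S : Matrix (Fin m) (Fin m) ℝ) :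
    Continuous fun x => gaussDensity x μ S := by
  unfold gaussDensity
  refine continuous_const.mul (Real.continuous_exp.comp (continuous_const.mul ?_))
  unfold dotProduct mulVec dotProduct
  refine continuous_finset_sum _ fun i _ => Continuous.mul ?_ ?_
  · exact (continuous_apply i).sub continuous_const
  · exact continuous_finset_sum _ fun j _ =>
      continuous_const.mul ((continuous_apply j).sub continuous_const)

lemma base_integrable (m : ℕ) :
    Integrable (fun z : Fin m → ℝ => Real.exp (-(1/2) * ∑ i, z i ^ 2)) := by
  have : ∀ z : Fin m → ℝ, Real.exp (-(1/2) * ∑ i, z i ^ 2)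
      = ∏ i, Real.exp (-(1/2) * z i ^ 2) := by
    intro z; rw [← Real.exp_sum]; congr 1; rw [Finset.mul_sum]
  simp_rw [this]
  exact Integrable.fintype_prod fun i => integrable_exp_neg_mul_sq (by norm_num)

lemma base_integral (m : ℕ) :
    ∫ z : Fin m → ℝ, Real.exp (-(1/2) * ∑ i, z i ^ 2) = (2 * Real.pi) ^ ((m : ℝ) / 2) := by
  have : ∀ z : Fin m → ℝ, Real.exp (-(1/2) * ∑ i, z i ^ 2)
      = ∏ i, Real.exp (-(1/2) * z i ^ 2) := by
    intro z; rw [← Real.exp_sum]; congr 1; rw [Finset.mul_sum]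
  simp_rw [this]
  rw [integral_fintype_prod_volume_eq_prod (f := fun (_ : Fin m) (v : ℝ) => Real.exp (-(1/2) * v ^ 2))]
  have h1 : ∫ v : ℝ, Real.exp (-(1/2) * v ^ 2) = Real.sqrt (Real.pi / (1/2)) := by
    simpa using integral_gaussian (1/2)
  rw [h1, Finset.prod_const]
  have h2 : Real.pi / (1/2) = 2 * Real.pi := by ring
  rw [h2, Finset.card_univ, Fintype.card_fin, ← Real.rpow_natCast (Real.sqrt (2*Real.pi)) m,
    Real.sqrt_eq_rpow, ← Real.rpow_mul (by positivity)]
  congr 1; ring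

lemma cov {m : ℕ} {M : Matrix (Fin m) (Fin m) ℝ} (hM : M.det ≠ 0)
    {g : (Fin m → ℝ) → ℝ} (hg : Integrable g) :
    Integrable (fun x => g (M *ᵥ x)) ∧
      ∫ x, g (M *ᵥ x) = |M.det|⁻¹ * ∫ z, g z := by
  set T : (Fin m → ℝ) →ₗ[ℝ] (Fin m → ℝ) := Matrix.toLin' M with hT
  have hdet : LinearMap.det T = M.det := LinearMap.det_toLin' M
  have hdT : LinearMap.det T ≠ 0 := by rw [hdet]; exact hM
  have hmap : Measure.map T volume = ENNReal.ofReal |(LinearMap.det T)⁻¹| • volume :=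
    Measure.map_linearMap_addHaar_eq_smul_addHaar volume hdT
  have hTx : ∀ x, T x = M *ᵥ x := fun x => Matrix.toLin'_apply M x
  have hTmeas : Measurable T := T.continuous_of_finiteDimensional.measurable
  have hgi : Integrable g (Measure.map T volume) := by
    rw [hmap]; exact hg.smul_measure ENNReal.ofReal_ne_top
  have hint : Integrable (fun x => g (T x)) :=
    (integrable_map_measure hgi.aestronglyMeasurable hTmeas.aemeasurable).mp hgi
  refine ⟨by simpa only [hTx] using hint, ?_⟩
  have h1 : ∫ x, g (T x) ∂volume = ∫ y, g y ∂(Measure.map T volume) :=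
    (integral_map hTmeas.aemeasurable hgi.aestronglyMeasurable).symm
  have h2 : ∫ y, g y ∂(Measure.map T volume) = |M.det|⁻¹ * ∫ z, g z := by
    rw [hmap, integral_smul_measure, hdet, ENNReal.toReal_ofReal (abs_nonneg _), abs_inv]
    simp [smul_eq_mul]
  calc ∫ x, g (M *ᵥ x) = ∫ x, g (T x) := by simp only [hTx]
    _ = _ := h1.trans h2

open scoped MatrixOrder

lemma gauss_int {m : ℕ} {S : Matrix (Fin m) (Fin m) ℝ} (hS : S.PosDef) (μ : Fin m → ℝ) :
    Integrable (fun x => gaussDensity x μ S) ∧ ∫ x, gaussDensity x μ S = 1 := by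
  have hA : (S⁻¹).PosDef := hS.inv
  set B := CFC.sqrt (S⁻¹) with hBdef
  have hBB : B * B = S⁻¹ := CFC.sqrt_mul_sqrt_self _ hA.posSemidef.nonneg
  have hBsymm : Bᵀ = B := by
    have := (CFC.sqrt_nonneg (S⁻¹)).posSemidef.1
    rwa [Matrix.IsHermitian, conjTranspose_eq_transpose_of_trivial] at this
  have hdetApos : 0 < (S⁻¹).det := hA.det_pos
  have hBsq : B.det * B.det = (S⁻¹).det := by rw [← det_mul, hBB]
  have hdetBne : B.det ≠ 0 := by
    intro h; rw [h, zero_mul] at hBsq; exact hdetApos.ne' hBsq.symm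
  have hs : 0 < S.det := hS.det_pos
  have habs : |B.det| = S.det ^ (-(1:ℝ)/2) := by
    have h2 : (S.det ^ (-(1:ℝ)/2)) * (S.det ^ (-(1:ℝ)/2)) = (S⁻¹).det := by
      rw [← Real.rpow_add hs, Matrix.det_nonsing_inv, Ring.inverse_eq_inv',
        show (-(1:ℝ)/2 + -(1:ℝ)/2) = -1 by norm_num, Real.rpow_neg_one]
    have h3 : 0 < S.det ^ (-(1:ℝ)/2) := Real.rpow_pos_of_pos hs _
    have h4 : (0:ℝ) ≤ |B.det| := abs_nonneg _
    nlinarith [abs_mul_abs_self B.det]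
  have hquad : ∀ v : Fin m → ℝ, v ⬝ᵥ (S⁻¹ *ᵥ v) = ∑ i, (B *ᵥ v) i ^ 2 := by
    intro v
    rw [← hBB, ← mulVec_mulVec, dotProduct_mulVec]
    have hv : v ᵥ* B = B *ᵥ v := by
      conv_lhs => rw [← hBsymm]
      rw [vecMul_transpose]
    rw [hv]
    simp [dotProduct, sq]
  set g : (Fin m → ℝ) → ℝ := fun z => Real.exp (-(1/2) * ∑ i, z i ^ 2) with hgdef
  have hg : Integrable g := base_integrable m
  obtain ⟨hcomp_int, hcomp_eq⟩ := cov (M := B) hdetBne hg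
  have hpt : ∀ x, gaussDensity x μ S
      = ((2 * Real.pi) ^ (-(m:ℝ) / 2) * S.det ^ (-(1:ℝ) / 2)) * g (B *ᵥ (x - μ)) := by
    intro x
    rw [hgdef]
    simp only [gaussDensity]
    rw [hquad (x - μ)]
  have hsub : MeasurePreserving (fun x : Fin m → ℝ => x - μ) volume volume :=
    measurePreserving_sub_right volume μ
  have hint2 : Integrable (fun x => g (B *ᵥ (x - μ))) :=
    (hsub.integrable_comp hcomp_int.aestronglyMeasurable).mpr hcomp_int
  have hint3 : Integrable (fun x => gaussDensity x μ S) := by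
    simp_rw [hpt]; exact hint2.const_mul _
  refine ⟨hint3, ?_⟩
  have heq1 : ∫ x, gaussDensity x μ S
      = ((2 * Real.pi) ^ (-(m:ℝ) / 2) * S.det ^ (-(1:ℝ) / 2)) * ∫ x, g (B *ᵥ (x - μ)) := by
    simp_rw [hpt]; rw [integral_const_mul]
  have heq2 : ∫ x, g (B *ᵥ (x - μ)) = ∫ x, g (B *ᵥ x) :=
    integral_sub_right_eq_self (fun x => g (B *ᵥ x)) μ
  rw [heq1, heq2, hcomp_eq, base_integral, habs]
  have h3 : 0 < S.det ^ (-(1:ℝ)/2) := Real.rpow_pos_of_pos hs _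
  have e2 : (2 * Real.pi) ^ (-(m:ℝ)/2) * (2 * Real.pi) ^ ((m:ℝ)/2) = 1 := by
    rw [← Real.rpow_add (by positivity), show (-(m:ℝ)/2 + (m:ℝ)/2) = 0 by ring, Real.rpow_zero]
  calc (2 * Real.pi) ^ (-(m:ℝ) / 2) * S.det ^ (-(1:ℝ) / 2) *
        ((S.det ^ (-(1:ℝ)/2))⁻¹ * (2 * Real.pi) ^ ((m:ℝ) / 2))
      = ((2 * Real.pi) ^ (-(m:ℝ)/2) * (2 * Real.pi) ^ ((m:ℝ)/2)) *
        (S.det ^ (-(1:ℝ)/2) * (S.det ^ (-(1:ℝ)/2))⁻¹) := by ring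
    _ = 1 := by rw [e2, mul_inv_cancel₀ (ne_of_gt h3), mul_one]

lemma gauss_lint {m : ℕ} {S : Matrix (Fin m) (Fin m) ℝ} (hS : S.PosDef) (μ : Fin m → ℝ) :
    ∫⁻ x, ENNReal.ofReal (gaussDensity x μ S) = 1 := by
  rw [← ofReal_integral_eq_lintegral_ofReal (gauss_int hS μ).1
    (Filter.Eventually.of_forall fun x => (gauss_pos x μ hS).le), (gauss_int hS μ).2,
    ENNReal.ofReal_one]

lemma mix_lintegral {m N : ℕ} (a : Fin N → ℝ) (ha : ∀ k, 0 ≤ a k)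
    (mu : Fin N → (Fin m → ℝ)) (S : Fin N → Matrix (Fin m) (Fin m) ℝ)
    (hS : ∀ k, (S k).PosDef) :
    ∫⁻ y, ENNReal.ofReal (∑ k, a k * gaussDensity y (mu k) (S k))
      = ENNReal.ofReal (∑ k, a k) := by
  have hmeas : ∀ k : Fin N, Measurable fun y : Fin m → ℝ =>
      ENNReal.ofReal (gaussDensity y (mu k) (S k)) :=
    fun k => (gauss_cont (mu k) (S k)).measurable.ennreal_ofReal
  have h1 : ∀ y : Fin m → ℝ, ENNReal.ofReal (∑ k, a k * gaussDensity y (mu k) (S k))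
      = ∑ k, ENNReal.ofReal (a k) * ENNReal.ofReal (gaussDensity y (mu k) (S k)) := by
    intro y
    rw [ENNReal.ofReal_sum_of_nonneg
      (fun k _ => mul_nonneg (ha k) (gauss_pos y (mu k) (hS k)).le)]
    exact Finset.sum_congr rfl fun k _ => ENNReal.ofReal_mul (ha k)
  simp_rw [h1]
  rw [lintegral_finset_sum _ (fun k _ => (hmeas k).const_mul _)]
  have h2 : ∀ k : Fin N, ∫⁻ y, ENNReal.ofReal (a k)
      * ENNReal.ofReal (gaussDensity y (mu k) (S k)) = ENNReal.ofReal (a k) := by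
    intro k
    rw [lintegral_const_mul _ (hmeas k), gauss_lint (hS k), mul_one]
  rw [Finset.sum_congr rfl fun k _ => h2 k]
  exact (ENNReal.ofReal_sum_of_nonneg fun k _ => ha k).symm

lemma vec_eq_zero {n : ℕ} {w : Fin n → ℝ} (h : ∀ v : Fin n → ℝ, v ⬝ᵥ w = 0) : w = 0 := by
  funext i
  have := h (Pi.single i 1)
  rwa [single_dotProduct, one_mul] at this


lemma mat_eq_of_ball {RX RY : ℕ} {W : Matrix (Fin RX) (Fin RX) ℝ} (hW : W.PosDef)
    {Γ1 Γ2 : Matrix (Fin RY) (Fin (RX+1)) ℝ} (c0 : Fin RX → ℝ) {r : ℝ} (hr : 0 < r)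
    (h : ∀ c, dist c c0 < r → Γ1 *ᵥ augVec W c = Γ2 *ᵥ augVec W c) : Γ1 = Γ2 := by
  set D := Γ1 - Γ2 with hD
  have hWunit : IsUnit W.det := isUnit_iff_ne_zero.mpr hW.det_pos.ne'
  have h0 : ∀ c, dist c c0 < r → D *ᵥ augVec W c = 0 := by
    intro c hc; rw [hD, Matrix.sub_mulVec, h c hc, sub_self]
  have hc0 : D *ᵥ augVec W c0 = 0 := h0 c0 (by simpa using hr)
  -- affine split
  have hsplit : ∀ v : Fin RX → ℝ, augVec W (c0 + v) = augVec W c0 + Fin.snoc (W *ᵥ v) 0 := by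
    intro v
    funext j
    refine Fin.lastCases ?_ (fun i => ?_) j
    · simp [augVec, Fin.snoc_last]
    · simp [augVec, Fin.snoc_castSucc, Matrix.mulVec_add, Pi.add_apply]
  have h1 : ∀ v : Fin RX → ℝ, ‖v‖ < r → D *ᵥ Fin.snoc (W *ᵥ v) (0:ℝ) = 0 := by
    intro v hv
    have hd : dist (c0 + v) c0 < r := by
      rw [dist_eq_norm]; simpa using hv
    have := h0 (c0 + v) hd
    rw [hsplit v, Matrix.mulVec_add, hc0, zero_add] at this
    exact this
  have h2 : ∀ v : Fin RX → ℝ, D *ᵥ Fin.snoc (W *ᵥ v) (0:ℝ) = 0 := by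
    intro v
    set t : ℝ := r / (2 * (‖v‖ + 1)) with ht
    have hvnorm : (0:ℝ) ≤ ‖v‖ := norm_nonneg v
    have htpos : 0 < t := by positivity
    have htv : ‖t • v‖ < r := by
      rw [norm_smul, Real.norm_eq_abs, abs_of_pos htpos, ht]
      rw [div_mul_eq_mul_div, mul_comm]
      rw [div_lt_iff₀ (by positivity)]
      nlinarith
    have hsnoc : (Fin.snoc (W *ᵥ (t • v)) (0:ℝ) : Fin (RX+1) → ℝ)
        = t • (Fin.snoc (W *ᵥ v) (0:ℝ) : Fin (RX+1) → ℝ) := by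
      funext j
      refine Fin.lastCases ?_ (fun i => ?_) j
      · simp [Fin.snoc_last]
      · simp [Fin.snoc_castSucc, Matrix.mulVec_smul]
    have := h1 (t • v) htv
    rw [hsnoc, Matrix.mulVec_smul, smul_eq_zero] at this
    rcases this with h' | h'
    · exact absurd h' htpos.ne'
    · exact h'
  -- columns
  have hcols : ∀ (i : Fin RY) (j : Fin RX), D i j.castSucc = 0 := by
    intro i j
    have := congrFun (h2 (W⁻¹ *ᵥ Pi.single j 1)) i
    rw [Matrix.mulVec_mulVec, Matrix.mul_nonsing_inv W hWunit, Matrix.one_mulVec] at this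
    rw [Matrix.mulVec, dotProduct, Fin.sum_univ_castSucc] at this
    simpa [Fin.snoc_castSucc, Fin.snoc_last, Pi.single_apply] using this
  have hlast : ∀ i : Fin RY, D i (Fin.last RX) = 0 := by
    intro i
    have := congrFun hc0 i
    rw [Matrix.mulVec, dotProduct, Fin.sum_univ_castSucc] at this
    simp only [augVec, Fin.snoc_castSucc, Fin.snoc_last, mul_one] at this
    have hz : ∑ j : Fin RX, D i j.castSucc * (W *ᵥ c0) j = 0 := by
      apply Finset.sum_eq_zero; intro j _; rw [hcols i j, zero_mul]
    rw [hz, zero_add] at this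
    exact this
  have : D = 0 := by
    funext i j
    refine Fin.lastCases ?_ (fun p => ?_) j
    · exact hlast i
    · exact hcols i p
  rw [hD] at this
  exact sub_eq_zero.mp this

lemma mulVec_injective_of_posDef {n : ℕ} {A : Matrix (Fin n) (Fin n) ℝ} (hA : A.PosDef)
    {x : Fin n → ℝ} (hx : A *ᵥ x = 0) : x = 0 := by
  have hu : IsUnit A.det := isUnit_iff_ne_zero.mpr hA.det_pos.ne'
  calc x = (A⁻¹ * A) *ᵥ x := by rw [Matrix.nonsing_inv_mul A hu, Matrix.one_mulVec]
    _ = A⁻¹ *ᵥ (A *ᵥ x) := by rw [Matrix.mulVec_mulVec]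
    _ = 0 := by rw [hx, Matrix.mulVec_zero]


lemma quad_ball {n : ℕ} {π1 π2 : ℝ} (hπ1 : 0 < π1) (hπ2 : 0 < π2)
    {μ1 μ2 : Fin n → ℝ} {S1 S2 : Matrix (Fin n) (Fin n) ℝ} (h1 : S1.PosDef) (h2 : S2.PosDef)
    (c0 : Fin n → ℝ) {r : ℝ} (hr : 0 < r)
    (h : ∀ c, dist c c0 < r → π1 * gaussDensity c μ1 S1 = π2 * gaussDensity c μ2 S2) :
    π1 = π2 ∧ μ1 = μ2 ∧ S1 = S2 := by
  set A1 := S1⁻¹ with hA1def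
  set A2 := S2⁻¹ with hA2def
  have hA1 : A1.PosDef := h1.inv
  have hA2 : A2.PosDef := h2.inv
  have hA1symm : A1ᵀ = A1 := by
    have := hA1.1; rwa [Matrix.IsHermitian, conjTranspose_eq_transpose_of_trivial] at this
  have hA2symm : A2ᵀ = A2 := by
    have := hA2.1; rwa [Matrix.IsHermitian, conjTranspose_eq_transpose_of_trivial] at this
  set K1 : ℝ := π1 * ((2 * Real.pi) ^ (-(n:ℝ) / 2) * S1.det ^ (-(1:ℝ) / 2)) with hK1
  set K2 : ℝ := π2 * ((2 * Real.pi) ^ (-(n:ℝ) / 2) * S2.det ^ (-(1:ℝ) / 2)) with hK2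
  have hK1pos : 0 < K1 := by
    apply mul_pos hπ1 (mul_pos (Real.rpow_pos_of_pos (by positivity) _)
      (Real.rpow_pos_of_pos h1.det_pos _))
  have hK2pos : 0 < K2 := by
    apply mul_pos hπ2 (mul_pos (Real.rpow_pos_of_pos (by positivity) _)
      (Real.rpow_pos_of_pos h2.det_pos _))
  set q1 : (Fin n → ℝ) → ℝ := fun c => (c - μ1) ⬝ᵥ (A1 *ᵥ (c - μ1)) with hq1
  set q2 : (Fin n → ℝ) → ℝ := fun c => (c - μ2) ⬝ᵥ (A2 *ᵥ (c - μ2)) with hq2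
  have hlog : ∀ c, dist c c0 < r →
      Real.log K1 + (-(1/2)) * q1 c = Real.log K2 + (-(1/2)) * q2 c := by
    intro c hc
    have hh := h c hc
    have e1 : π1 * gaussDensity c μ1 S1 = K1 * Real.exp (-(1/2) * q1 c) := by
      simp only [gaussDensity, hK1, hq1]; ring
    have e2 : π2 * gaussDensity c μ2 S2 = K2 * Real.exp (-(1/2) * q2 c) := by
      simp only [gaussDensity, hK2, hq2]; ring
    rw [e1, e2] at hh
    have := congrArg Real.log hh
    rwa [Real.log_mul hK1pos.ne' (Real.exp_pos _).ne',
      Real.log_mul hK2pos.ne' (Real.exp_pos _).ne', Real.log_exp, Real.log_exp] at this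
  set d1 : Fin n → ℝ := c0 - μ1 with hd1
  set d2 : Fin n → ℝ := c0 - μ2 with hd2
  have hexp : ∀ (A : Matrix (Fin n) (Fin n) ℝ) (d v : Fin n → ℝ),
      (v + d) ⬝ᵥ (A *ᵥ (v + d)) =
        v ⬝ᵥ (A *ᵥ v) + (v ⬝ᵥ (A *ᵥ d) + d ⬝ᵥ (A *ᵥ v)) + d ⬝ᵥ (A *ᵥ d) := by
    intro A d v
    rw [Matrix.mulVec_add, add_dotProduct, dotProduct_add, dotProduct_add]
    ring
  set Q : (Fin n → ℝ) → ℝ := fun v => v ⬝ᵥ (A2 *ᵥ v) - v ⬝ᵥ (A1 *ᵥ v) with hQ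
  set L : (Fin n → ℝ) → ℝ :=
    fun v => (v ⬝ᵥ (A2 *ᵥ d2) + d2 ⬝ᵥ (A2 *ᵥ v)) - (v ⬝ᵥ (A1 *ᵥ d1) + d1 ⬝ᵥ (A1 *ᵥ v)) with hL
  have hball : ∀ v : Fin n → ℝ, ‖v‖ < r → Q v + L v = 0 := by
    intro v hv
    have hc : dist (c0 + v) c0 < r := by rw [dist_eq_norm]; simpa using hv
    have e1 := hlog (c0 + v) hc
    have e0 := hlog c0 (by simpa using hr)
    have hq1v : q1 (c0 + v) = v ⬝ᵥ (A1 *ᵥ v) + (v ⬝ᵥ (A1 *ᵥ d1) + d1 ⬝ᵥ (A1 *ᵥ v))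
        + d1 ⬝ᵥ (A1 *ᵥ d1) := by
      have : c0 + v - μ1 = v + d1 := by rw [hd1]; ring
      rw [hq1]; simp only [this]; exact hexp A1 d1 v
    have hq2v : q2 (c0 + v) = v ⬝ᵥ (A2 *ᵥ v) + (v ⬝ᵥ (A2 *ᵥ d2) + d2 ⬝ᵥ (A2 *ᵥ v))
        + d2 ⬝ᵥ (A2 *ᵥ d2) := by
      have : c0 + v - μ2 = v + d2 := by rw [hd2]; ring
      rw [hq2]; simp only [this]; exact hexp A2 d2 v
    have hq10 : q1 c0 = d1 ⬝ᵥ (A1 *ᵥ d1) := by rw [hq1, hd1]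
    have hq20 : q2 c0 = d2 ⬝ᵥ (A2 *ᵥ d2) := by rw [hq2, hd2]
    rw [hq1v, hq2v] at e1
    rw [hq10, hq20] at e0
    rw [hQ, hL]
    dsimp only
    linarith
  -- homogeneity ⇒ Q = 0 and L = 0 everywhere
  have hQL : ∀ v : Fin n → ℝ, Q v = 0 ∧ L v = 0 := by
    intro v
    have hvn : (0:ℝ) ≤ ‖v‖ := norm_nonneg v
    set t1 : ℝ := r / (2 * (‖v‖ + 1)) with ht1
    set t2 : ℝ := r / (4 * (‖v‖ + 1)) with ht2
    have ht1pos : 0 < t1 := by positivity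
    have ht2pos : 0 < t2 := by positivity
    have ht1ne : t1 ≠ t2 := by
      rw [ht1, ht2]
      intro hcon
      rw [div_eq_div_iff (by positivity) (by positivity)] at hcon
      nlinarith
    have hQhom : ∀ t : ℝ, Q (t • v) = t^2 * Q v := by
      intro t
      rw [hQ]; dsimp only
      simp only [Matrix.mulVec_smul, smul_dotProduct, dotProduct_smul,
        smul_eq_mul]
      ring
    have hLhom : ∀ t : ℝ, L (t • v) = t * L v := by
      intro t
      rw [hL]; dsimp only
      simp only [Matrix.mulVec_smul, smul_dotProduct, dotProduct_smul,
        smul_eq_mul]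
      ring
    have hnorm : ∀ t : ℝ, 0 < t → t ≤ r / (2 * (‖v‖ + 1)) → ‖t • v‖ < r := by
      intro t htpos hle
      rw [norm_smul, Real.norm_eq_abs, abs_of_pos htpos]
      have : t * ‖v‖ ≤ r / (2 * (‖v‖ + 1)) * ‖v‖ := by
        apply mul_le_mul_of_nonneg_right hle hvn
      have h2 : r / (2 * (‖v‖ + 1)) * ‖v‖ < r := by
        rw [div_mul_eq_mul_div, div_lt_iff₀ (by positivity)]
        nlinarith
      linarith
    have e1 := hball (t1 • v) (hnorm t1 ht1pos le_rfl)
    have e2 := hball (t2 • v) (hnorm t2 ht2pos (by rw [div_le_div_iff₀ (by positivity) (by positivity)]; nlinarith))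
    rw [hQhom, hLhom] at e1
    rw [hQhom, hLhom] at e2
    have f1 : t1 * Q v + L v = 0 := by
      have : t1 * (t1 * Q v + L v) = 0 := by ring_nf; ring_nf at e1; linarith
      rcases mul_eq_zero.mp this with h' | h'
      · exact absurd h' ht1pos.ne'
      · exact h'
    have f2 : t2 * Q v + L v = 0 := by
      have : t2 * (t2 * Q v + L v) = 0 := by ring_nf; ring_nf at e2; linarith
      rcases mul_eq_zero.mp this with h' | h'
      · exact absurd h' ht2pos.ne'
      · exact h'
    have hQv : Q v = 0 := by
      have : (t1 - t2) * Q v = 0 := by linarith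
      rcases mul_eq_zero.mp this with h' | h'
      · exact absurd (sub_eq_zero.mp h') ht1ne
      · exact h'
    refine ⟨hQv, ?_⟩
    have := f1
    rw [hQv, mul_zero, zero_add] at this
    exact this
  -- symmetric dot product lemma
  have hsymmdot : ∀ (A : Matrix (Fin n) (Fin n) ℝ), Aᵀ = A →
      ∀ u w : Fin n → ℝ, w ⬝ᵥ (A *ᵥ u) = u ⬝ᵥ (A *ᵥ w) := by
    intro A hAs u w
    rw [Matrix.dotProduct_mulVec]
    conv_lhs => rw [← hAs]
    rw [Matrix.vecMul_transpose, dotProduct_comm]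
  -- M = A2 - A1 = 0
  have hM : A2 = A1 := by
    have hMsym : (A2 - A1)ᵀ = A2 - A1 := by rw [Matrix.transpose_sub, hA1symm, hA2symm]
    have hq : ∀ v : Fin n → ℝ, v ⬝ᵥ ((A2 - A1) *ᵥ v) = 0 := by
      intro v
      rw [Matrix.sub_mulVec, dotProduct_sub]
      exact (hQL v).1
    have hpolar : ∀ u w : Fin n → ℝ, u ⬝ᵥ ((A2 - A1) *ᵥ w) = 0 := by
      intro u w
      have e := hq (u + w)
      rw [Matrix.mulVec_add, add_dotProduct, dotProduct_add,
        dotProduct_add] at e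
      have hsw := hsymmdot (A2 - A1) hMsym w u
      have hqu := hq u
      have hqw := hq w
      linarith
    have : A2 - A1 = 0 := by
      ext i j
      have := hpolar (Pi.single i 1) (Pi.single j 1)
      rw [single_dotProduct, one_mul] at this
      rw [Matrix.mulVec, dotProduct_single, mul_one] at this
      simpa using this
    have := sub_eq_zero.mp this
    exact this
  have hS12 : S1 = S2 := by
    have e1 : S1 = A1⁻¹ := (Matrix.nonsing_inv_nonsing_inv S1
      (isUnit_iff_ne_zero.mpr h1.det_pos.ne')).symm
    have e2 : S2 = A2⁻¹ := (Matrix.nonsing_inv_nonsing_inv S2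
      (isUnit_iff_ne_zero.mpr h2.det_pos.ne')).symm
    rw [e1, e2, hM]
  -- μ equality
  have hμ : μ1 = μ2 := by
    have hlin : ∀ v : Fin n → ℝ, v ⬝ᵥ (A1 *ᵥ (d2 - d1)) = 0 := by
      intro v
      have hLv := (hQL v).2
      rw [hL] at hLv
      dsimp only at hLv
      rw [hM] at hLv
      have h1' := hsymmdot A1 hA1symm d1 v
      have h2' := hsymmdot A1 hA1symm d2 v
      rw [Matrix.mulVec_sub, dotProduct_sub]
      linarith
    have : A1 *ᵥ (d2 - d1) = 0 := vec_eq_zero hlin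
    have hd : d2 - d1 = 0 := mulVec_injective_of_posDef hA1 this
    have : μ1 - μ2 = 0 := by
      rw [hd1, hd2] at hd
      have : c0 - μ2 - (c0 - μ1) = μ1 - μ2 := by ring
      rwa [this] at hd
    have := sub_eq_zero.mp this
    exact this
  refine ⟨?_, hμ, hS12⟩
  have hc0 := h c0 (by simpa using hr)
  rw [hμ, hS12] at hc0
  exact mul_right_cancel₀ (gauss_pos c0 μ2 h2).ne' hc0

lemma cont_mulVec_aug {RX RY : ℕ} (W : Matrix (Fin RX) (Fin RX) ℝ)
    (Γ : Matrix (Fin RY) (Fin (RX+1)) ℝ) :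
    Continuous fun c : Fin RX → ℝ => Γ *ᵥ augVec W c := by
  apply continuous_pi; intro i
  simp only [Matrix.mulVec, dotProduct]
  apply continuous_finset_sum; intro j _
  apply Continuous.mul continuous_const
  refine Fin.lastCases ?_ (fun p => ?_) j
  · simp only [augVec, Fin.snoc_last]
    exact continuous_const
  · simp only [augVec, Fin.snoc_castSucc]
    simp only [Matrix.mulVec, dotProduct]
    exact continuous_finset_sum _ fun q _ => continuous_const.mul (continuous_apply q)

end FunWeightClustAux

open FunWeightClustAux

/-- Identifiability of the functional cluster weighted model (Theorem 1 of the paper). -/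
theorem identifiability_funWeightClust {RX RY K K' : ℕ} (hK : 0 < K) (hK' : 0 < K')
    (W : Matrix (Fin RX) (Fin RX) ℝ) (hW : W.PosDef)
    (π : Fin K → ℝ) (π' : Fin K' → ℝ)
    (Γ : Fin K → Matrix (Fin RY) (Fin (RX + 1)) ℝ)
    (Γ' : Fin K' → Matrix (Fin RY) (Fin (RX + 1)) ℝ)
    (SY : Fin K → Matrix (Fin RY) (Fin RY) ℝ)
    (SY' : Fin K' → Matrix (Fin RY) (Fin RY) ℝ)
    (μX : Fin K → (Fin RX → ℝ)) (μX' : Fin K' → (Fin RX → ℝ))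
    (SX : Fin K → Matrix (Fin RX) (Fin RX) ℝ)
    (SX' : Fin K' → Matrix (Fin RX) (Fin RX) ℝ)
    (hπpos : ∀ k, 0 < π k) (hπ'pos : ∀ k, 0 < π' k)
    (hπsum : ∑ k, π k = 1) (hπ'sum : ∑ k, π' k = 1)
    (hSY : ∀ k, (SY k).PosDef) (hSY' : ∀ k, (SY' k).PosDef)
    (hSX : ∀ k, (SX k).PosDef) (hSX' : ∀ k, (SX' k).PosDef)
    (hdist : ∀ k l, k ≠ l → (Γ k, SY k) ≠ (Γ l, SY l))
    (hdist' : ∀ k l, k ≠ l → (Γ' k, SY' k) ≠ (Γ' l, SY' l))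
    (𝒳 : Set (Fin RX → ℝ)) (h𝒳 : volume 𝒳ᶜ = 0)
    -- identifiability of mixtures of Gaussian regressions for each fixed cX ∈ 𝒳
    (hident : ∀ cX ∈ 𝒳, ∀ (α : Fin K → ℝ) (α' : Fin K' → ℝ),
      (∀ k, 0 < α k) → (∀ k, 0 < α' k) → (∑ k, α k) = 1 → (∑ k, α' k) = 1 →
      (∀ cY : Fin RY → ℝ,
        ∑ k, α k * gaussDensity cY (Γ k *ᵥ augVec W cX) (SY k) =
          ∑ k, α' k * gaussDensity cY (Γ' k *ᵥ augVec W cX) (SY' k)) →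
      ∃ σ : Fin K ≃ Fin K', ∀ k,
        α k = α' (σ k) ∧ Γ k *ᵥ augVec W cX = Γ' (σ k) *ᵥ augVec W cX ∧ SY k = SY' (σ k))
    -- equality of the two cluster weighted mixture densities on 𝒳 × ℝ^{R_Y}
    (heq : ∀ cX ∈ 𝒳, ∀ cY : Fin RY → ℝ,
      ∑ k, π k * gaussDensity cY (Γ k *ᵥ augVec W cX) (SY k) *
          gaussDensity cX (μX k) (SX k) =
        ∑ k, π' k * gaussDensity cY (Γ' k *ᵥ augVec W cX) (SY' k) *
          gaussDensity cX (μX' k) (SX' k)) :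
    K = K' ∧ ∃ σ : Fin K ≃ Fin K', ∀ k,
      π k = π' (σ k) ∧ Γ k = Γ' (σ k) ∧ SY k = SY' (σ k) ∧
        μX k = μX' (σ k) ∧ SX k = SX' (σ k) := by
  classical
  have hKne : Nonempty (Fin K) := ⟨⟨0, hK⟩⟩
  have hK'ne : Nonempty (Fin K') := ⟨⟨0, hK'⟩⟩
  set gX : Fin K → (Fin RX → ℝ) → ℝ :=
    fun k c => π k * gaussDensity c (μX k) (SX k) with hgX
  set gX' : Fin K' → (Fin RX → ℝ) → ℝ :=
    fun k c => π' k * gaussDensity c (μX' k) (SX' k) with hgX'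
  have hgXpos : ∀ k c, 0 < gX k c := fun k c => mul_pos (hπpos k) (gauss_pos c _ (hSX k))
  have hgX'pos : ∀ k c, 0 < gX' k c := fun k c => mul_pos (hπ'pos k) (gauss_pos c _ (hSX' k))
  set p : (Fin RX → ℝ) → ℝ := fun c => ∑ k, gX k c with hp
  set p' : (Fin RX → ℝ) → ℝ := fun c => ∑ k, gX' k c with hp'
  have hppos : ∀ c, 0 < p c :=
    fun c => Finset.sum_pos (fun k _ => hgXpos k c) Finset.univ_nonempty
  have hp'pos : ∀ c, 0 < p' c :=
    fun c => Finset.sum_pos (fun k _ => hgX'pos k c) Finset.univ_nonempty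
  -- step 1 : total masses agree on 𝒳
  have hpp' : ∀ c ∈ 𝒳, p c = p' c := by
    intro c hc
    have hL : ∀ cY : Fin RY → ℝ,
        ∑ k, π k * gaussDensity cY (Γ k *ᵥ augVec W c) (SY k) * gaussDensity c (μX k) (SX k)
          = ∑ k, gX k c * gaussDensity cY (Γ k *ᵥ augVec W c) (SY k) := by
      intro cY; exact Finset.sum_congr rfl fun k _ => by rw [hgX]; ring
    have hR : ∀ cY : Fin RY → ℝ,
        ∑ k, π' k * gaussDensity cY (Γ' k *ᵥ augVec W c) (SY' k) * gaussDensity c (μX' k) (SX' k)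
          = ∑ k, gX' k c * gaussDensity cY (Γ' k *ᵥ augVec W c) (SY' k) := by
      intro cY; exact Finset.sum_congr rfl fun k _ => by rw [hgX']; ring
    have h2 : ∀ cY : Fin RY → ℝ,
        ∑ k, gX k c * gaussDensity cY (Γ k *ᵥ augVec W c) (SY k)
          = ∑ k, gX' k c * gaussDensity cY (Γ' k *ᵥ augVec W c) (SY' k) := by
      intro cY; rw [← hL, ← hR]; exact heq c hc cY
    have h3 := congrArg (fun f => ∫⁻ cY, ENNReal.ofReal (f cY))
      (funext h2 : (fun cY => ∑ k, gX k c * gaussDensity cY (Γ k *ᵥ augVec W c) (SY k)) = _)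
    simp only at h3
    rw [mix_lintegral (fun k => gX k c) (fun k => (hgXpos k c).le) _ _ hSY,
      mix_lintegral (fun k => gX' k c) (fun k => (hgX'pos k c).le) _ _ hSY'] at h3
    exact (ENNReal.ofReal_eq_ofReal_iff (hppos c).le (hp'pos c).le).mp h3
  -- step 2 : pointwise identifiability on 𝒳
  have hmain : ∀ c ∈ 𝒳, ∃ σ : Fin K ≃ Fin K', ∀ k,
      gX k c = gX' (σ k) c ∧ Γ k *ᵥ augVec W c = Γ' (σ k) *ᵥ augVec W c
        ∧ SY k = SY' (σ k) := by
    intro c hc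
    have hmix : ∀ cY : Fin RY → ℝ,
        ∑ k, (gX k c / p c) * gaussDensity cY (Γ k *ᵥ augVec W c) (SY k) =
          ∑ k, (gX' k c / p' c) * gaussDensity cY (Γ' k *ᵥ augVec W c) (SY' k) := by
      intro cY
      have e1 : ∑ k, (gX k c / p c) * gaussDensity cY (Γ k *ᵥ augVec W c) (SY k)
          = (∑ k, π k * gaussDensity cY (Γ k *ᵥ augVec W c) (SY k)
              * gaussDensity c (μX k) (SX k)) / p c := by
        rw [Finset.sum_div]
        exact Finset.sum_congr rfl fun k _ => by rw [hgX]; ring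
      have e2 : ∑ k, (gX' k c / p' c) * gaussDensity cY (Γ' k *ᵥ augVec W c) (SY' k)
          = (∑ k, π' k * gaussDensity cY (Γ' k *ᵥ augVec W c) (SY' k)
              * gaussDensity c (μX' k) (SX' k)) / p' c := by
        rw [Finset.sum_div]
        exact Finset.sum_congr rfl fun k _ => by rw [hgX']; ring
      rw [e1, e2, heq c hc cY, hpp' c hc]
    obtain ⟨σ, hσ⟩ := hident c hc (fun k => gX k c / p c) (fun k => gX' k c / p' c)
      (fun k => div_pos (hgXpos k c) (hppos c))
      (fun k => div_pos (hgX'pos k c) (hp'pos c))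
      (by rw [← Finset.sum_div]; exact div_self (hppos c).ne')
      (by rw [← Finset.sum_div]; exact div_self (hp'pos c).ne')
      hmix
    refine ⟨σ, fun k => ⟨?_, (hσ k).2.1, (hσ k).2.2⟩⟩
    have h1 := (hσ k).1
    rw [hpp' c hc] at h1
    rw [div_eq_div_iff (hp'pos c).ne' (hp'pos c).ne'] at h1
    exact mul_right_cancel₀ (hp'pos c).ne' h1
  -- step 3 : density of 𝒳
  have hdense : Dense 𝒳 := by
    rw [dense_iff_inter_open]
    intro U hU hUne
    by_contra hcon
    rw [Set.not_nonempty_iff_eq_empty] at hcon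
    have hsub : U ⊆ 𝒳ᶜ := by
      intro x hx
      intro hx'
      have : x ∈ U ∩ 𝒳 := ⟨hx, hx'⟩
      rw [hcon] at this
      exact this
    exact (hU.measure_ne_zero volume hUne) (measure_mono_null hsub h𝒳)
  -- step 4 : Baire category
  set C : (Fin K ≃ Fin K') → Set (Fin RX → ℝ) := fun σ =>
    {c | ∀ k, gX k c = gX' (σ k) c ∧ Γ k *ᵥ augVec W c = Γ' (σ k) *ᵥ augVec W c
      ∧ SY k = SY' (σ k)} with hC
  have hCclosed : ∀ σ, IsClosed (C σ) := by
    intro σ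
    have : C σ = ⋂ k, ({c | gX k c = gX' (σ k) c}
        ∩ ({c | Γ k *ᵥ augVec W c = Γ' (σ k) *ᵥ augVec W c} ∩ {c | SY k = SY' (σ k)})) := by
      ext c
      simp only [hC, Set.mem_setOf_eq, Set.mem_iInter, Set.mem_inter_iff]
    rw [this]
    refine isClosed_iInter fun k => (IsClosed.inter ?_ (IsClosed.inter ?_ ?_))
    · exact isClosed_eq (continuous_const.mul (gauss_cont (μX k) (SX k)))
        (continuous_const.mul (gauss_cont (μX' (σ k)) (SX' (σ k))))
    · exact isClosed_eq (cont_mulVec_aug W (Γ k)) (cont_mulVec_aug W (Γ' (σ k)))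
    · by_cases h : SY k = SY' (σ k)
      · have he : {c : Fin RX → ℝ | SY k = SY' (σ k)} = Set.univ := by ext c; simp [h]
        rw [he]; exact isClosed_univ
      · have he : {c : Fin RX → ℝ | SY k = SY' (σ k)} = ∅ := by ext c; simp [h]
        rw [he]; exact isClosed_empty
  have hcover : 𝒳 ⊆ ⋃ σ, C σ := by
    intro c hc
    obtain ⟨σ, hσ⟩ := hmain c hc
    exact Set.mem_iUnion.mpr ⟨σ, hσ⟩
  have huniv : (⋃ σ, C σ) = Set.univ := by
    apply Set.eq_univ_of_univ_subset
    rw [← hdense.closure_eq]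
    exact closure_minimal hcover (isClosed_iUnion_of_finite hCclosed)
  obtain ⟨σ, hσint⟩ := nonempty_interior_of_iUnion_of_closed hCclosed huniv
  obtain ⟨c1, hc1⟩ := hσint
  obtain ⟨r, hrpos, hballsub⟩ := Metric.isOpen_iff.mp isOpen_interior c1 hc1
  have hsub : Metric.ball c1 r ⊆ C σ := hballsub.trans interior_subset
  have hget : ∀ c, dist c c1 < r → ∀ k,
      gX k c = gX' (σ k) c ∧ Γ k *ᵥ augVec W c = Γ' (σ k) *ᵥ augVec W c
        ∧ SY k = SY' (σ k) := by
    intro c hcd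
    exact hsub (Metric.mem_ball.mpr hcd)
  refine ⟨by simpa using Fintype.card_congr σ, σ, fun k => ?_⟩
  have hq := quad_ball (hπpos k) (hπ'pos (σ k)) (hSX k) (hSX' (σ k)) c1 hrpos
    (fun c hcd => (hget c hcd k).1)
  have hΓeq : Γ k = Γ' (σ k) := mat_eq_of_ball hW c1 hrpos
    (fun c hcd => (hget c hcd k).2.1)
  have hSYeq : SY k = SY' (σ k) :=
    (hget c1 (by simpa using hrpos) k).2.2
  exact ⟨hq.1, hΓeq, hSYeq, hq.2.1, hq.2.2⟩
end

section
/- Let W_X be a symmetric positive definite R_X × R_X matrix, Q_k an orthogonal R_X × R_X matrix with columns q_{k1}, …, q_{kR_X}, D_k = diag(a_{k1}, …, a_{k d_k}, b_k, …, b_k) with a_{kl}, b_k > 0, and Σ_{X,k} = W_X^{-1/2} Q_k D_k Q_kᵀ W_X^{-1/2}. Let Σ_{Y,k} be symmetric positive definite R_Y × R_Y, Γ*_k ∈ ℝ^{R_Y × (R_X+1)}, μ_{X,k} ∈ ℝ^{R_X}, and π_k > 0. Define δ(c_X) = Σ_{l=1}^{d_k} (q_{kl}ᵀ W_X^{1/2}(c_X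 − μ_{X,k})(c_X − μ_{X,k})ᵀ W_X^{1/2} q_{kl}) / a_{kl} + Σ_{l=d_k+1}^{R_X} (q_{kl}ᵀ W_X^{1/2}(c_X − μ_{X,k})(c_X − μ_{X,k})ᵀ W_X^{1/2} q_{kl}) / b_k and H_k(c_Y, c_X) = −2 log π_k + Σ_{l=1}^{d_k} log a_{kl} + (R_X − d_k) log b_k + log|Σ_{Y,k}| + δ(c_X) + (c_Y − Γ*_k c*_X)ᵀ Σ_{Y,k}⁻¹ (c_Y − Γ*_k c*_X). Then for all c_X ∈ ℝ^{R_X} and c_Y ∈ ℝ^{R_Y}, φ(c_X; μ_{X,k}, Σ_{X,k}) φ(c_Y; Γ*_k c*_X, Σ_{Y,k}) = (2π)^{−(R_X+R_Y)/2} |W_X|^{1/2} π_k⁻¹ exp(−(1/2) H_k(c_Y, c_X)). -/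
open Matrix

/-- Key computation of Proposition 2:
`φ(c_X; μ_{X,k}, Σ_{X,k}) φ(c_Y; Γ*_k c*_X, Σ_{Y,k})
  = (2π)^{-(R_X+R_Y)/2} |W_X|^{1/2} π_k⁻¹ exp(-(1/2) H_k(c_Y,c_X))`. -/
theorem density_product_eq_H {RX RY : ℕ}
    (W Whalf : Matrix (Fin RX) (Fin RX) ℝ)
    (hW : W.PosDef) (hWhalf : Whalf.PosDef) (hsq : Whalf * Whalf = W)
    (Q : Matrix (Fin RX) (Fin RX) ℝ) (hQ : Qᵀ * Q = 1)
    (d : ℕ) (hd : d ≤ RX)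
    (a : Fin RX → ℝ) (b : ℝ)
    (ha : ∀ l : Fin RX, (l : ℕ) < d → 0 < a l) (hb : 0 < b)
    (D : Matrix (Fin RX) (Fin RX) ℝ)
    (hD : D = Matrix.diagonal (fun l : Fin RX => if (l : ℕ) < d then a l else b))
    (SX : Matrix (Fin RX) (Fin RX) ℝ)
    (hSX : SX = Whalf⁻¹ * Q * D * Qᵀ * Whalf⁻¹)
    (SY : Matrix (Fin RY) (Fin RY) ℝ) (hSY : SY.PosDef)
    (Γ : Matrix (Fin RY) (Fin (RX + 1)) ℝ)
    (μX : Fin RX → ℝ) (πk : ℝ) (hπk : 0 < πk)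
    (δ : (Fin RX → ℝ) → ℝ)
    (hδ : ∀ cX, δ cX =
      (∑ l ∈ Finset.univ.filter (fun l : Fin RX => (l : ℕ) < d),
        ((fun j => Q j l) ⬝ᵥ
          ((Whalf * Matrix.vecMulVec (cX - μX) (cX - μX) * Whalf) *ᵥ (fun j => Q j l))) / a l) +
      (∑ l ∈ Finset.univ.filter (fun l : Fin RX => ¬ (l : ℕ) < d),
        ((fun j => Q j l) ⬝ᵥ
          ((Whalf * Matrix.vecMulVec (cX - μX) (cX - μX) * Whalf) *ᵥ (fun j => Q j l))) / b))
    (H : (Fin RY → ℝ) → (Fin RX → ℝ) → ℝ)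
    (hH : ∀ cY cX, H cY cX =
      -2 * Real.log πk +
      (∑ l ∈ Finset.univ.filter (fun l : Fin RX => (l : ℕ) < d), Real.log (a l)) +
      ((RX : ℝ) - (d : ℝ)) * Real.log b + Real.log SY.det + δ cX +
      (cY - Γ *ᵥ augVec W cX) ⬝ᵥ (SY⁻¹ *ᵥ (cY - Γ *ᵥ augVec W cX))) :
    ∀ (cX : Fin RX → ℝ) (cY : Fin RY → ℝ),
      gaussDensity cX μX SX * gaussDensity cY (Γ *ᵥ augVec W cX) SY =
        (2 * Real.pi) ^ (-(((RX : ℝ) + (RY : ℝ)) / 2)) * W.det ^ ((1 : ℝ) / 2) * πk⁻¹ *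
          Real.exp (-(1 / 2) * H cY cX) := by
  intro cX cY
  -- basic notation
  set e : Fin RX → ℝ := fun l => if (l : ℕ) < d then a l else b with he
  have hepos : ∀ l, 0 < e l := by
    intro l; by_cases h : (l : ℕ) < d <;> simp only [he, h, if_true, if_false]
    · exact ha l h
    · exact hb
  set v : Fin RX → ℝ := cX - μX with hv
  -- invertibility facts
  have hWhalfdet : Whalf.det ≠ 0 := hWhalf.det_pos.ne'
  have hWhalfU : IsUnit Whalf.det := isUnit_iff_ne_zero.mpr hWhalfdet
  have hWhalfT : Whalfᵀ = Whalf := hWhalf.isHermitian.eq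
  have hQd : Q.det * Q.det = 1 := by
    have := congrArg Matrix.det hQ
    simpa [Matrix.det_mul, Matrix.det_transpose] using this
  have hQQT : Q * Qᵀ = 1 := mul_eq_one_comm.mp hQ
  have hmul : Matrix.diagonal e * Matrix.diagonal (fun l => (e l)⁻¹) = 1 := by
    rw [Matrix.diagonal_mul_diagonal]
    have : (fun l => e l * (e l)⁻¹) = fun _ => (1 : ℝ) := by
      funext l
      exact mul_inv_cancel₀ (hepos l).ne'
    rw [this, Matrix.diagonal_one]
  have hDinv : D⁻¹ = Matrix.diagonal (fun l => (e l)⁻¹) := by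
    apply Matrix.inv_eq_right_inv
    rw [hD]
    exact hmul
  have hDD : D * D⁻¹ = 1 := by
    rw [hDinv, hD]
    exact hmul
  -- inverse of SX
  have hSXinv : SX⁻¹ = Whalf * Q * D⁻¹ * Qᵀ * Whalf := by
    apply Matrix.inv_eq_right_inv
    rw [hSX]
    simp only [Matrix.mul_assoc]
    rw [← Matrix.mul_assoc Whalf⁻¹ Whalf, Matrix.nonsing_inv_mul _ hWhalfU, Matrix.one_mul,
      ← Matrix.mul_assoc Qᵀ Q, hQ, Matrix.one_mul,
      ← Matrix.mul_assoc D D⁻¹, hDD, Matrix.one_mul,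
      ← Matrix.mul_assoc Q Qᵀ, hQQT, Matrix.one_mul,
      Matrix.nonsing_inv_mul _ hWhalfU]
  -- symmetric dot product exchange
  have hsymdot : ∀ (x y : Fin RX → ℝ), x ⬝ᵥ (Whalf *ᵥ y) = (Whalf *ᵥ x) ⬝ᵥ y := by
    intro x y
    rw [Matrix.dotProduct_mulVec, ← Matrix.mulVec_transpose, hWhalfT]
  set u : Fin RX → ℝ := Qᵀ *ᵥ (Whalf *ᵥ v) with hu
  have hul : ∀ l, u l = (fun j => Q j l) ⬝ᵥ (Whalf *ᵥ v) := by
    intro l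
    simp only [hu, Matrix.mulVec, dotProduct, Matrix.transpose_apply]
  -- quadratic form equals diagonal sum
  have quadX : v ⬝ᵥ (SX⁻¹ *ᵥ v) = ∑ l, (e l)⁻¹ * (u l) ^ 2 := by
    rw [hSXinv, hDinv]
    have expand : (Whalf * Q * Matrix.diagonal (fun l => (e l)⁻¹) * Qᵀ * Whalf) *ᵥ v =
        Whalf *ᵥ (Q *ᵥ (Matrix.diagonal (fun l => (e l)⁻¹) *ᵥ u)) := by
      simp [hu, ← Matrix.mulVec_mulVec, Matrix.mul_assoc]
    rw [expand, hsymdot]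
    rw [Matrix.dotProduct_mulVec (Whalf *ᵥ v) Q, ← Matrix.mulVec_transpose, ← hu]
    simp [dotProduct, Matrix.mulVec_diagonal]
    apply Finset.sum_congr rfl
    intro l _
    ring
  -- each δ term
  have hterm : ∀ l : Fin RX,
      (fun j => Q j l) ⬝ᵥ ((Whalf * Matrix.vecMulVec v v * Whalf) *ᵥ (fun j => Q j l))
        = (u l) ^ 2 := by
    intro l
    set q : Fin RX → ℝ := fun j => Q j l with hq
    have h1 : (Whalf * Matrix.vecMulVec v v * Whalf) *ᵥ q =
        Whalf *ᵥ (Matrix.vecMulVec v v *ᵥ (Whalf *ᵥ q)) := by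
      simp [← Matrix.mulVec_mulVec, Matrix.mul_assoc]
    have h2 : Matrix.vecMulVec v v *ᵥ (Whalf *ᵥ q) = (v ⬝ᵥ (Whalf *ᵥ q)) • v := by
      funext i
      simp only [Matrix.mulVec, Matrix.vecMulVec_apply, dotProduct, Pi.smul_apply,
        smul_eq_mul, Finset.sum_mul]
      apply Finset.sum_congr rfl
      intro x _
      ring
    have h3 : v ⬝ᵥ (Whalf *ᵥ q) = q ⬝ᵥ (Whalf *ᵥ v) := by
      rw [hsymdot, dotProduct_comm]
    rw [h1, h2, Matrix.mulVec_smul, dotProduct_smul, h3, ← hul, smul_eq_mul]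
    ring
  -- δ equals quadratic form
  have hδeq : δ cX = v ⬝ᵥ (SX⁻¹ *ᵥ v) := by
    rw [hδ, quadX]
    rw [← Finset.sum_filter_add_sum_filter_not Finset.univ (fun l : Fin RX => (l : ℕ) < d)
      (fun l => (e l)⁻¹ * (u l) ^ 2)]
    congr 1
    · apply Finset.sum_congr rfl
      intro l hl
      simp only [Finset.mem_filter] at hl
      rw [← hv, hterm l, he]
      simp only [hl.2, if_true]
      rw [div_eq_mul_inv, mul_comm]
    · apply Finset.sum_congr rfl
      intro l hl
      simp only [Finset.mem_filter] at hl
      rw [← hv, hterm l, he]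
      simp only [hl.2, if_false]
      rw [div_eq_mul_inv, mul_comm]
  -- determinant facts
  have hdetD : D.det = ∏ l, e l := by rw [hD]; exact Matrix.det_diagonal
  have hdetDpos : 0 < D.det := by
    rw [hdetD]; exact Finset.prod_pos (fun l _ => hepos l)
  have hdetW : 0 < W.det := hW.det_pos
  have hdetWhalf_sq : Whalf.det * Whalf.det = W.det := by
    rw [← Matrix.det_mul, hsq]
  have hdetSX : SX.det = D.det / W.det := by
    rw [hSX]
    rw [Matrix.det_mul, Matrix.det_mul, Matrix.det_mul, Matrix.det_mul,
      Matrix.det_nonsing_inv, Matrix.det_transpose, Ring.inverse_eq_inv']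
    have h : Whalf.det⁻¹ * Q.det * D.det * Q.det * Whalf.det⁻¹ =
        (Q.det * Q.det) * D.det / (Whalf.det * Whalf.det) := by
      field_simp
    rw [h, hQd, hdetWhalf_sq, one_mul]
  -- cardinality
  have hcard : (Finset.univ.filter (fun l : Fin RX => (l : ℕ) < d)).card = d := by
    rw [Finset.card_filter, Fin.sum_univ_eq_sum_range (fun i => if i < d then 1 else 0),
      ← Finset.card_filter]
    have : (Finset.range RX).filter (· < d) = Finset.range d := by
      ext i; simp; omega
    rw [this, Finset.card_range]
  have hcardnot : (Finset.univ.filter (fun l : Fin RX => ¬ (l : ℕ) < d)).card = RX - d := by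
    have := Finset.card_filter_add_card_filter_not (s := (Finset.univ : Finset (Fin RX)))
      (p := fun l : Fin RX => (l : ℕ) < d)
    simp only [Finset.card_univ, Fintype.card_fin] at this
    omega
  -- log of det D
  have hlog : Real.log D.det =
      (∑ l ∈ Finset.univ.filter (fun l : Fin RX => (l : ℕ) < d), Real.log (a l)) +
      ((RX : ℝ) - (d : ℝ)) * Real.log b := by
    rw [hdetD, Real.log_prod (fun l _ => (hepos l).ne')]
    rw [← Finset.sum_filter_add_sum_filter_not Finset.univ (fun l : Fin RX => (l : ℕ) < d)
      (fun l => Real.log (e l))]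
    congr 1
    · apply Finset.sum_congr rfl
      intro l hl
      simp only [Finset.mem_filter] at hl
      simp [he, hl.2]
    · rw [Finset.sum_congr rfl (fun l hl => by
        simp only [Finset.mem_filter] at hl
        simp only [he, hl.2, if_false] : ∀ l ∈ _, Real.log (e l) = Real.log b)]
      rw [Finset.sum_const, hcardnot, nsmul_eq_mul]
      rw [Nat.cast_sub hd]
  -- rpow to exp conversions
  have A2 : SX.det ^ (-(1 : ℝ) / 2) =
      W.det ^ ((1 : ℝ) / 2) * Real.exp (-(1 / 2) * Real.log D.det) := by
    rw [hdetSX, Real.div_rpow hdetDpos.le hdetW.le,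
      Real.rpow_def_of_pos hdetDpos]
    rw [show (-(1 : ℝ) / 2) = -((1 : ℝ) / 2) by ring, Real.rpow_neg hdetW.le,
      div_eq_mul_inv, inv_inv, mul_comm (Real.log D.det)]
    exact mul_comm _ _
  rw [hlog] at A2
  have A3 : SY.det ^ (-(1 : ℝ) / 2) = Real.exp (-(1 / 2) * Real.log SY.det) := by
    rw [Real.rpow_def_of_pos hSY.det_pos]
    ring_nf
  have A1 : (2 * Real.pi) ^ (-(((RX : ℝ) + (RY : ℝ)) / 2)) =
      (2 * Real.pi) ^ (-(RX : ℝ) / 2) * (2 * Real.pi) ^ (-(RY : ℝ) / 2) := by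
    rw [← Real.rpow_add (by positivity)]
    ring_nf
  -- the exponent of H
  set qY : ℝ := (cY - Γ *ᵥ augVec W cX) ⬝ᵥ (SY⁻¹ *ᵥ (cY - Γ *ᵥ augVec W cX)) with hqY
  have hHval : -(1 / 2 : ℝ) * H cY cX =
      Real.log πk +
      (-(1 / 2) * ((∑ l ∈ Finset.univ.filter (fun l : Fin RX => (l : ℕ) < d), Real.log (a l)) +
        ((RX : ℝ) - (d : ℝ)) * Real.log b)) + (-(1 / 2) * δ cX) +
      (-(1 / 2) * Real.log SY.det) + (-(1 / 2) * qY) := by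
    rw [hH]
    ring
  -- final assembly
  rw [hHval, Real.exp_add, Real.exp_add, Real.exp_add, Real.exp_add, Real.exp_log hπk]
  unfold gaussDensity
  rw [show (cX - μX) = v from hv.symm, ← hδeq, A1, A2, A3, ← hqY]
  field_simp
end
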